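/- arXiv:2204.09113 — 3 statements merged into one kernel-verified Lean document; each statement's English description precedes it below -/
import Mathlib

section
/- Let G be a graph and k ≥ 1, c ≥ 2 integers. For any positive integer r, if G has a weak kr-guidance system of maximum outdegree at most c, then the k-distance power G^k has a weak r-guidance system of maximum outdegree at most 2c^k. -/
open SimpleGraph

variable {V : Type*}

/-- `H` is a partial orientation of `G`: every directed edge of `H` projects to an edge of `G`. -/
def IsPartialOrientation (G : SimpleGraph V) (H : V → V → Prop) : Prop :=
  ∀ ⦃u v⦄, H u v → G.Adj u v

/-- `oball H v a` is the set of vertices reachable from `v` in `H` by a directed path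
of length at most `a`. -/
def oball (H : V → V → Prop) (v : V) : ℕ → Set V
  | 0 => {v}
  | a + 1 => oball H v a ∪ {w | ∃ x ∈ oball H v a, H x w}

/-- `gate G u v` is the set of neighbors of `u` at distance `dist u v - 1` from `v`,
i.e. the possible second vertices of shortest `u`-`v` paths. -/
def gate (G : SimpleGraph V) (u v : V) : Set V :=
  {y | G.Adj u y ∧ G.dist y v = G.dist u v - 1}

/-- `H` is a weak `r`-guidance system of `G`: for distinct `u,v` at distance `ℓ ≤ r`
there are `a + b = ℓ - 1` and an edge of `G` between `oball H u a` and `oball H v b`. -/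
def IsWeakGuidance (G : SimpleGraph V) (H : V → V → Prop) (r : ℕ) : Prop :=
  ∀ u v : V, u ≠ v → G.Reachable u v → G.dist u v ≤ r →
    ∃ a b : ℕ, a + b = G.dist u v - 1 ∧ ∃ x ∈ oball H u a, ∃ y ∈ oball H v b, G.Adj x y

/-- Gate formulation of weak `r`-guidance systems: for `u,v` at distance `ℓ` with
`2 ≤ ℓ ≤ r`, `u` has an outneighbor in `gate G u v` or `v` has one in `gate G v u`. -/
def IsWeakGuidanceGate (G : SimpleGraph V) (H : V → V → Prop) (r : ℕ) : Prop :=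
  ∀ u v : V, 2 ≤ G.dist u v → G.dist u v ≤ r →
    (∃ y ∈ gate G u v, H u y) ∨ (∃ y ∈ gate G v u, H v y)

/-- The outdegree of `u` in the partial orientation `H`. -/
noncomputable def outdeg (H : V → V → Prop) (u : V) : ℕ := {v | H u v}.ncard

/-- The `k`-distance power of `G`: two distinct vertices are adjacent iff their distance
in `G` is at most `k`. -/
def distPower (G : SimpleGraph V) (k : ℕ) : SimpleGraph V where
  Adj u v := u ≠ v ∧ G.Reachable u v ∧ G.dist u v ≤ k
  symm := by
    constructor
    intro u v h
    exact ⟨h.1.symm, h.2.1.symm, by rw [G.dist_comm]; exact h.2.2⟩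
  loopless := by constructor; intro u h; exact h.1 rfl

/-!
Let `F` join `a` to every other vertex reachable from `a` by an `H`-path of length at most `k`.
Radius-`m` balls of `F` are radius-`k m` balls of `H`, just as radius-`m` balls of `G^k` are
radius-`k m` balls of `G`; so if `u, v` are at distance `L` in `G^k`, their distance `ℓ` in `G`
satisfies `k (L - 1) < ℓ ≤ k L`. The weak `k r`-guidance of `H` gives `H`-paths `u → x` and
`v → y` of lengths `a + b = ℓ - 1` with `xy` an edge of `G`. Cutting them after `k A` and `k B`
steps, where `A = ⌊a / k⌋` and `A + B = L - 1`, leaves two vertices at `G`-distance at most `k`,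
distinct since `ℓ > k (A + B)`: an edge of `G^k` between the `F`-balls of radii `A` and `B`.
The out-degree of `F` at `u` is below `|B_H(u, k)| ≤ 1 + c + ⋯ + c^k < 2 c^k`.
-/

section oball

variable {H H' : V → V → Prop} {m n : ℕ} {u x y z : V}

lemma mem_oball_self (H : V → V → Prop) (u : V) : ∀ n, u ∈ oball H u n
  | 0 => rfl
  | n + 1 => Or.inl (mem_oball_self H u n)

lemma oball_subset_oball (h : m ≤ n) : oball H u m ⊆ oball H u n := by
  induction h with
  | refl => exact subset_rfl
  | step _ ih => exact ih.trans Set.subset_union_left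

lemma oball_mono (h : H ≤ H') : oball H u n ⊆ oball H' u n := by
  induction n with
  | zero => exact subset_rfl
  | succ n ih =>
    rintro z (hz | ⟨w, hw, hwz⟩)
    · exact Or.inl (ih hz)
    · exact Or.inr ⟨w, ih hw, h w z hwz⟩

lemma mem_oball_trans (hy : y ∈ oball H x m) (hz : z ∈ oball H y n) :
    z ∈ oball H x (m + n) := by
  induction n generalizing z with
  | zero => obtain rfl : z = y := hz; exact hy
  | succ n ih =>
    rcases hz with hz | ⟨w, hw, hwz⟩
    · exact Or.inl (ih hz)
    · exact Or.inr ⟨w, ih hw, hwz⟩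

lemma exists_mem_oball_of_mem_oball_add (hz : z ∈ oball H u (m + n)) :
    ∃ y ∈ oball H u m, z ∈ oball H y n := by
  induction n generalizing z with
  | zero => exact ⟨z, hz, rfl⟩
  | succ n ih =>
    rcases hz with hz | ⟨w, hw, hwz⟩
    · obtain ⟨y, hy, hzy⟩ := ih hz
      exact ⟨y, hy, Or.inl hzy⟩
    · obtain ⟨y, hy, hwy⟩ := ih hw
      exact ⟨y, hy, Or.inr ⟨w, hwy, hwz⟩⟩

lemma exists_mem_oball_of_mem_oball (m : ℕ) (hz : z ∈ oball H u n) :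
    ∃ y ∈ oball H u m, z ∈ oball H y (n - m) := by
  rcases le_or_gt m n with hmn | hnm
  · exact exists_mem_oball_of_mem_oball_add (by rwa [Nat.add_sub_cancel' hmn])
  · exact ⟨z, oball_subset_oball hnm.le hz, mem_oball_self H z _⟩

lemma oball_succ_subset (u : V) (n : ℕ) :
    oball H u (n + 1) ⊆ insert u (⋃ w ∈ {w | H u w}, oball H w n) := by
  induction n with
  | zero =>
    rintro z (rfl | ⟨_, rfl, huz⟩)
    · exact Set.mem_insert _ _
    · exact Or.inr (Set.mem_biUnion huz rfl)
  | succ n ih =>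
    rintro z (hz | ⟨x, hx, hxz⟩)
    · rcases ih hz with rfl | hz
      · exact Set.mem_insert _ _
      · obtain ⟨w, hw, hz⟩ := Set.mem_iUnion₂.mp hz
        exact Or.inr (Set.mem_biUnion hw (Or.inl hz))
    · rcases ih hx with rfl | hx
      · exact Or.inr (Set.mem_biUnion hxz (mem_oball_self H z _))
      · obtain ⟨w, hw, hx⟩ := Set.mem_iUnion₂.mp hx
        exact Or.inr (Set.mem_biUnion hw (Or.inr ⟨x, hx, hxz⟩))

end oball

section graph

variable {G : SimpleGraph V} {H : V → V → Prop} {n : ℕ} {u v : V}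

theorem SimpleGraph.Walk.mem_oball_length : ∀ {u v : V} (p : G.Walk u v),
    v ∈ oball G.Adj u p.length
  | _, _, .nil => rfl
  | _, _, .cons h p => by
    rw [Walk.length_cons, add_comm]
    exact mem_oball_trans (Or.inr ⟨_, rfl, h⟩) p.mem_oball_length

lemma exists_walk_of_mem_oball (hv : v ∈ oball G.Adj u n) :
    ∃ p : G.Walk u v, p.length ≤ n := by
  induction n generalizing v with
  | zero => obtain rfl : v = u := hv; exact ⟨.nil, le_rfl⟩
  | succ n ih =>
    rcases hv with hv | ⟨w, hw, hwv⟩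
    · obtain ⟨p, hp⟩ := ih hv
      exact ⟨p, by omega⟩
    · obtain ⟨p, hp⟩ := ih hw
      exact ⟨p.concat hwv, by simpa using hp⟩

lemma mem_oball_adj_iff : v ∈ oball G.Adj u n ↔ G.Reachable u v ∧ G.dist u v ≤ n := by
  constructor
  · intro hv
    obtain ⟨p, hp⟩ := exists_walk_of_mem_oball hv
    exact ⟨p.reachable, (dist_le p).trans hp⟩
  · rintro ⟨hr, hd⟩
    obtain ⟨p, hp⟩ := hr.exists_walk_length_eq_dist
    exact oball_subset_oball (hp ▸ hd) p.mem_oball_length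

lemma mem_oball_adj_comm : v ∈ oball G.Adj u n ↔ u ∈ oball G.Adj v n := by
  simp only [mem_oball_adj_iff, reachable_comm, dist_comm]

end graph

section power

variable {G : SimpleGraph V} {H : V → V → Prop} {c k : ℕ} {u v x y : V}

def orientPower (H : V → V → Prop) (k : ℕ) (a b : V) : Prop :=
  a ≠ b ∧ b ∈ oball H a k

lemma oball_orientPower (H : V → V → Prop) (k : ℕ) (u : V) (m : ℕ) :
    oball (orientPower H k) u m = oball H u (k * m) := by
  induction m with
  | zero => rfl
  | succ m ih =>
    ext z
    constructor
    · rintro (hz | ⟨w, hw, -, hwz⟩)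
      · exact oball_subset_oball (Nat.mul_le_mul_left k m.le_succ) (ih ▸ hz)
      · exact mem_oball_trans (ih ▸ hw) hwz
    · intro hz
      obtain ⟨w, hw, hwz⟩ := exists_mem_oball_of_mem_oball_add (m := k * m) (n := k) hz
      rw [← ih] at hw
      by_cases hwz' : w = z
      · exact Or.inl (hwz' ▸ hw)
      · exact Or.inr ⟨w, hw, hwz', hwz⟩

lemma distPower_adj_eq_orientPower (G : SimpleGraph V) (k : ℕ) :
    (distPower G k).Adj = orientPower G.Adj k := by
  funext a b
  exact propext (and_congr_right' mem_oball_adj_iff.symm)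

lemma oball_distPower (G : SimpleGraph V) (k : ℕ) (u : V) (m : ℕ) :
    oball (distPower G k).Adj u m = oball G.Adj u (k * m) := by
  rw [distPower_adj_eq_orientPower, oball_orientPower]

lemma IsPartialOrientation.orientPower (hpo : IsPartialOrientation G H) (k : ℕ) :
    IsPartialOrientation (distPower G k) (orientPower H k) := by
  rintro a b ⟨hab, hb⟩
  rw [distPower_adj_eq_orientPower]
  exact ⟨hab, oball_mono hpo hb⟩

lemma outdeg_orientPower_le [Finite V] (H : V → V → Prop) (k : ℕ) (u : V) :
    outdeg (orientPower H k) u ≤ (oball H u k).ncard :=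
  Set.ncard_le_ncard fun _ h => h.2

-- The `+ 1` makes the induction close: `1 + c (2 c^n - 1) ≤ 2 c^(n+1) - 1` when `c ≥ 2`.
lemma ncard_oball_add_one_le [Finite V] (hc : 2 ≤ c) (hout : ∀ u, outdeg H u ≤ c)
    (u : V) (n : ℕ) : (oball H u n).ncard + 1 ≤ 2 * c ^ n := by
  induction n generalizing u with
  | zero => simp [oball]
  | succ n ih =>
    set s := (Set.toFinite {w | H u w}).toFinset
    have hs : s.card ≤ c := (Set.ncard_eq_toFinset_card _ _).symm.trans_le (hout u)
    have hQ : 2 * c ^ n - 1 + 1 = 2 * c ^ n := Nat.sub_add_cancel (by have := ih u; omega)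
    calc (oball H u (n + 1)).ncard + 1
        ≤ (insert u (⋃ w ∈ s, oball H w n)).ncard + 1 := by
          gcongr
          · exact Set.toFinite _
          · simpa [s] using oball_succ_subset u n
      _ ≤ (⋃ w ∈ s, oball H w n).ncard + 2 := by
          have := Set.ncard_insert_le u (⋃ w ∈ s, oball H w n)
          omega
      _ ≤ ∑ w ∈ s, (oball H w n).ncard + 2 := by
          gcongr
          exact s.set_ncard_biUnion_le _
      _ ≤ ∑ _w ∈ s, (2 * c ^ n - 1) + 2 := by
          gcongr with w
          have := ih w
          omega
      _ ≤ c * (2 * c ^ n - 1) + 2 := by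
          rw [Finset.sum_const, smul_eq_mul]
          gcongr
      _ ≤ 2 * c ^ (n + 1) := by
          rw [pow_succ]
          nlinarith

lemma exists_add_eq_sub_add_sub_lt {k L a b : ℕ} (h : a + b < k * L) :
    ∃ A B, A + B = L - 1 ∧ a - k * A + (b - k * B) < k := by
  have hk : 0 < k := Nat.pos_of_ne_zero (by rintro rfl; simp at h)
  have hq : a / k < L := (Nat.div_lt_iff_lt_mul hk).2 (by rw [mul_comm]; omega)
  have hdiv := Nat.div_add_mod a k
  have hmod := Nat.mod_lt a hk
  generalize a / k = q at *
  refine ⟨q, L - 1 - q, by omega, ?_⟩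
  have hkL : k * q + k * (L - 1 - q) + k = k * L := by
    rw [← mul_add, ← mul_add_one]
    congr 1
    omega
  omega

lemma exists_distPower_adj_of_adj (hpo : IsPartialOrientation G H) {a b A B : ℕ}
    (hab : a - k * A + (b - k * B) < k) (huv : v ∉ oball G.Adj u (k * (A + B)))
    (hx : x ∈ oball H u a) (hy : y ∈ oball H v b) (hxy : G.Adj x y) :
    ∃ x' ∈ oball (orientPower H k) u A, ∃ y' ∈ oball (orientPower H k) v B,
      (distPower G k).Adj x' y' := by
  obtain ⟨x', hux', hx'x⟩ := exists_mem_oball_of_mem_oball (k * A) hx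
  obtain ⟨y', hvy', hy'y⟩ := exists_mem_oball_of_mem_oball (k * B) hy
  refine ⟨x', oball_orientPower H k u A ▸ hux', y', oball_orientPower H k v B ▸ hvy', ?_⟩
  rw [distPower_adj_eq_orientPower]
  refine ⟨?_, ?_⟩
  · rintro rfl
    apply huv
    rw [mul_add]
    exact mem_oball_trans (oball_mono hpo hux') (mem_oball_adj_comm.1 (oball_mono hpo hvy'))
  · have hxy' : y ∈ oball G.Adj x 1 := Or.inr ⟨x, rfl, hxy⟩
    have := mem_oball_trans (mem_oball_trans (oball_mono hpo hx'x) hxy')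
      (mem_oball_adj_comm.1 (oball_mono hpo hy'y))
    exact oball_subset_oball (by omega) this

lemma IsWeakGuidance.orientPower {r : ℕ} (hpo : IsPartialOrientation G H)
    (hw : IsWeakGuidance G H (k * r)) : IsWeakGuidance (distPower G k) (orientPower H k) r := by
  intro u v hne hreach hLr
  set L := (distPower G k).dist u v
  have hL : 0 < L := hreach.pos_dist_of_ne hne
  have hv : v ∈ oball G.Adj u (k * L) :=
    oball_distPower G k u L ▸ mem_oball_adj_iff.2 ⟨hreach, le_rfl⟩
  have hv' : v ∉ oball G.Adj u (k * (L - 1)) := by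
    rw [← oball_distPower, mem_oball_adj_iff]
    omega
  obtain ⟨hGreach, hℓ⟩ := mem_oball_adj_iff.1 hv
  have hℓpos := hGreach.pos_dist_of_ne hne
  obtain ⟨a, b, hab, x, hx, y, hy, hxy⟩ :=
    hw u v hne hGreach (hℓ.trans (Nat.mul_le_mul_left k hLr))
  have hab' : a + b < k * L := by omega
  obtain ⟨A, B, hAB, hsplit⟩ := exists_add_eq_sub_add_sub_lt hab'
  exact ⟨A, B, hAB, exists_distPower_adj_of_adj hpo hsplit (hAB ▸ hv') hx hy hxy⟩

end power

theorem distPower_weakGuidance_general {V : Type*} [Fintype V] (G : SimpleGraph V)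
    (k c r : ℕ) (hc : 2 ≤ c) (H : V → V → Prop)
    (hpo : IsPartialOrientation G H) (hw : IsWeakGuidance G H (k * r))
    (hout : ∀ u, outdeg H u ≤ c) :
    ∃ F : V → V → Prop, IsPartialOrientation (distPower G k) F ∧
      IsWeakGuidance (distPower G k) F r ∧ ∀ u, outdeg F u ≤ 2 * c ^ k :=
  ⟨orientPower H k, hpo.orientPower k, hw.orientPower hpo, fun u =>
    (outdeg_orientPower_le H k u).trans (Nat.le_of_succ_le (ncard_oball_add_one_le hc hout u k))⟩

/-- If `G` has a weak `k·r`-guidance system of maximum outdegree at most `c` (`k ≥ 1`,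
`c ≥ 2`), then the `k`-distance power `G^k` has a weak `r`-guidance system of maximum
outdegree at most `2 c^k`. -/
theorem distPower_weakGuidance {V : Type*} [Fintype V] (G : SimpleGraph V)
    (k c r : ℕ) (hk : 1 ≤ k) (hc : 2 ≤ c) (hr : 1 ≤ r) (H : V → V → Prop)
    (hpo : IsPartialOrientation G H) (hw : IsWeakGuidance G H (k * r))
    (hout : ∀ u, outdeg H u ≤ c) :
    ∃ F : V → V → Prop, IsPartialOrientation (distPower G k) F ∧
      IsWeakGuidance (distPower G k) F r ∧ ∀ u, outdeg F u ≤ 2 * c ^ k :=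
  distPower_weakGuidance_general G k c r hc H hpo hw hout
end

section
/- Let T be the graph obtained from the star K_{1,n} by subdividing every edge exactly twice, and let G = T², the square of T. Then in any 3⁺-guidance system for G, some vertex has outdegree at least (n-1)/2. -/
open SimpleGraph

variable {V : Type*}

/-- `H` is an `r⁺`-guidance system of `G`. -/
def IsPlusGuidance (G : SimpleGraph V) (H : V → V → Prop) (r : ℕ) : Prop :=
  ∀ u v : V, 2 ≤ G.dist u v → G.dist u v ≤ r →
    ∃ a b : ℕ, a + b = G.dist u v ∧ (oball H u a ∩ oball H v b).Nonempty

/-- The star `K_{1,n}` with every edge subdivided exactly twice: the center is `none`,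
and for each `i : Fin n` the path `none — (i,0) — (i,1) — (i,2)` where `(i,2)` is a leaf. -/
def starSubdiv (n : ℕ) : SimpleGraph (Option (Fin n × Fin 3)) :=
  SimpleGraph.fromRel (fun a b =>
    (∃ i, a = none ∧ b = some (i, 0)) ∨
    (∃ i, a = some (i, 0) ∧ b = some (i, 1)) ∨
    (∃ i, a = some (i, 1) ∧ b = some (i, 2)))

/-! The leaves `(i, 2)` are pairwise at distance 3 in `G`, and the only shortest path between
`(i, 2)` and `(j, 2)` runs through `(i, 0)` and `(j, 0)`, crossing the clique `{(k, 0)}` in a single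
edge. Out-balls of radii `a + b = 3` around the two leaves can only meet along this path, so the
ball of radius at least 2 must follow it across the clique edge, which is therefore oriented. Thus
`H` restricted to the clique is semicomplete, and a semicomplete digraph on `n` vertices has a
vertex of outdegree at least `(n - 1) / 2`, since the outdegrees sum to at least `n (n - 1) / 2`.
-/

open Finset in
lemma exists_card_sub_one_le_two_mul_outdeg {α : Type*} [Fintype α] [Nonempty α]
    (R : α → α → Prop) (hR : ∀ i j, i ≠ j → R i j ∨ R j i) :
    ∃ i, Fintype.card α - 1 ≤ 2 * outdeg R i := by
  classical
  have hout (i : α) : outdeg R i = #(univ.bipartiteAbove R i) := by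
    rw [outdeg, ← Set.ncard_coe_finset, coe_bipartiteAbove]
    simp
  have hcover (i : α) :
      Fintype.card α - 1 ≤ #(univ.bipartiteAbove R i) + #(univ.bipartiteBelow R i) :=
    calc Fintype.card α - 1 = #(univ.erase i) := by simp
      _ ≤ #(univ.bipartiteAbove R i ∪ univ.bipartiteBelow R i) := card_le_card fun j hj => by
          simpa using hR i j (ne_of_mem_erase hj).symm
      _ ≤ _ := card_union_le _ _
  refine (exists_le_of_sum_le univ_nonempty ?_).imp fun i => And.right
  calc ∑ _ : α, (Fintype.card α - 1)
      ≤ ∑ i, (#(univ.bipartiteAbove R i) + #(univ.bipartiteBelow R i)) :=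
        sum_le_sum fun i _ => hcover i
    _ = ∑ i, 2 * outdeg R i := by
        rw [sum_add_distrib, ← sum_card_bipartiteAbove_eq_sum_card_bipartiteBelow, ← two_mul,
          mul_sum]
        simp only [hout]

lemma outdeg_onFun_le {α : Type*} [Finite V] (H : V → V → Prop) {f : α → V}
    (hf : Function.Injective f) (i : α) : outdeg (Function.onFun H f) i ≤ outdeg H (f i) :=
  Set.ncard_le_ncard_of_injOn f (fun _ h => h) hf.injOn

namespace SimpleGraph

variable {G : SimpleGraph V}

lemma Walk.eq_or_adj_or_exists_adj_adj_of_length_le_two {u v : V} (p : G.Walk u v)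
    (hp : p.length ≤ 2) :
    u = v ∨ G.Adj u v ∨ ∃ w, G.Adj u w ∧ G.Adj w v := by
  rcases p with _ | ⟨h, _ | ⟨h', _ | ⟨_, _⟩⟩⟩
  · exact .inl rfl
  · exact .inr (.inl h)
  · exact .inr (.inr ⟨_, h, h'⟩)
  · simp at hp

end SimpleGraph

lemma distPower_two_adj_iff (G : SimpleGraph V) (u v : V) :
    (distPower G 2).Adj u v ↔ u ≠ v ∧ (G.Adj u v ∨ ∃ w, G.Adj u w ∧ G.Adj w v) := by
  refine ⟨fun ⟨hne, hreach, hle⟩ => ?_, fun ⟨hne, h⟩ => ⟨hne, ?_⟩⟩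
  · obtain ⟨p, hp⟩ := hreach.exists_walk_length_eq_dist
    exact ⟨hne, (p.eq_or_adj_or_exists_adj_adj_of_length_le_two (hp ▸ hle)).resolve_left hne⟩
  · rcases h with h | ⟨w, h, h'⟩
    · exact ⟨h.reachable, (dist_le h.toWalk).trans (by simp)⟩
    · let p : G.Walk u v := .cons h (.cons h' .nil)
      exact ⟨p.reachable, (dist_le p).trans_eq rfl⟩

section oball

variable {G : SimpleGraph V} {H : V → V → Prop} {u v w : V} {a b : ℕ}

lemma mem_oball_self_s4 : v ∈ oball H v a := by
  induction a with
  | zero => rfl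
  | succ a ih => exact .inl ih

lemma mem_oball_succ :
    w ∈ oball H v (a + 1) ↔ w ∈ oball H v a ∨ ∃ x ∈ oball H v a, H x w :=
  Iff.rfl

lemma mem_oball_succ' :
    w ∈ oball H v (a + 1) ↔ w = v ∨ ∃ x, H v x ∧ w ∈ oball H x a := by
  induction a generalizing w with
  | zero => simp [oball]
  | succ a ih =>
    simp only [mem_oball_succ (a := a + 1), ih, mem_oball_succ (a := a)]
    constructor
    · rintro ((rfl | ⟨x, hx, hw⟩) | ⟨z, rfl | ⟨x, hx, hz⟩, hzw⟩)
      · exact .inl rfl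
      · exact .inr ⟨x, hx, .inl hw⟩
      · exact .inr ⟨w, hzw, .inl mem_oball_self_s4⟩
      · exact .inr ⟨x, hx, .inr ⟨z, hz, hzw⟩⟩
    · rintro (rfl | ⟨x, hx, hw | ⟨z, hz, hzw⟩⟩)
      · exact .inl (.inl rfl)
      · exact .inl (.inr ⟨x, hx, hw⟩)
      · exact .inr ⟨z, .inr ⟨x, hx, hz⟩, hzw⟩

lemma IsPartialOrientation.exists_walk_of_mem_oball (hH : IsPartialOrientation G H)
    (hw : w ∈ oball H v a) : ∃ p : G.Walk v w, p.length ≤ a := by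
  induction a generalizing w with
  | zero => obtain rfl : w = v := hw; exact ⟨.nil, le_rfl⟩
  | succ a ih =>
    rcases hw with hw | ⟨z, hz, hzw⟩
    · obtain ⟨p, hp⟩ := ih hw
      exact ⟨p, by omega⟩
    · obtain ⟨p, hp⟩ := ih hz
      exact ⟨p.concat (hH hzw), by simpa using hp⟩

lemma IsPartialOrientation.exists_walk_of_mem_oball_inter
    (hH : IsPartialOrientation G H) (hu : w ∈ oball H u a) (hv : w ∈ oball H v b) :
    ∃ p : G.Walk u v, p.length ≤ a + b := by
  obtain ⟨p, hp⟩ := hH.exists_walk_of_mem_oball hu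
  obtain ⟨q, hq⟩ := hH.exists_walk_of_mem_oball hv
  exact ⟨p.append q.reverse, by simp; omega⟩

lemma IsPartialOrientation.exists_rel_rel_of_mem_oball_inter
    (hH : IsPartialOrientation G H) (hd : a + 1 < G.dist u v) (hu : w ∈ oball H u a)
    (hv : w ∈ oball H v (b + 2)) : ∃ x y, H v x ∧ H x y ∧ w ∈ oball H y b := by
  have hfar {c : ℕ} (hc : c ≤ 1) (hw : w ∈ oball H v c) : False := by
    obtain ⟨p, hp⟩ := hH.exists_walk_of_mem_oball_inter hu hw
    have := G.dist_le p
    omega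
  rcases mem_oball_succ'.1 hv with rfl | ⟨x, hvx, hx⟩
  · exact (hfar zero_le_one mem_oball_self_s4).elim
  rcases mem_oball_succ'.1 hx with rfl | ⟨y, hxy, hy⟩
  · exact (hfar le_rfl (mem_oball_succ'.2 (.inr ⟨w, hvx, mem_oball_self_s4⟩))).elim
  exact ⟨x, y, hvx, hxy, hy⟩

end oball

section starSubdiv

variable {n : ℕ} {H : Option (Fin n × Fin 3) → Option (Fin n × Fin 3) → Prop}

lemma starSubdiv_adj_some_none_iff (i : Fin n) (k : Fin 3) :
    (starSubdiv n).Adj (some (i, k)) none ↔ k = 0 := by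
  simp [starSubdiv]

lemma starSubdiv_adj_some_some_iff (i j : Fin n) (k l : Fin 3) :
    (starSubdiv n).Adj (some (i, k)) (some (j, l)) ↔
      i = j ∧ (k.val + 1 = l.val ∨ l.val + 1 = k.val) := by
  simp only [starSubdiv, fromRel_adj]
  rcases eq_or_ne i j with rfl | hij <;> fin_cases k <;> fin_cases l <;> simp_all [ne_comm]

lemma starSubdiv_adj_leaf_iff (i : Fin n) (y : Option (Fin n × Fin 3)) :
    (starSubdiv n).Adj (some (i, 2)) y ↔ y = some (i, 1) := by
  rcases y with _ | ⟨j, l⟩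
  · simp [starSubdiv_adj_some_none_iff]
  · fin_cases l <;> simp [starSubdiv_adj_some_some_iff, eq_comm]

lemma starSubdiv_adj_mid_iff (i : Fin n) (y : Option (Fin n × Fin 3)) :
    (starSubdiv n).Adj (some (i, 1)) y ↔ y = some (i, 0) ∨ y = some (i, 2) := by
  rcases y with _ | ⟨j, l⟩
  · simp [starSubdiv_adj_some_none_iff]
  · fin_cases l <;> simp [starSubdiv_adj_some_some_iff, eq_comm]

lemma starSubdiv_square_adj_some_some_of_ne {i j : Fin n} (hij : i ≠ j) (k l : Fin 3) :
    (distPower (starSubdiv n) 2).Adj (some (i, k)) (some (j, l)) ↔ k = 0 ∧ l = 0 := by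
  simp only [distPower_two_adj_iff, starSubdiv_adj_some_some_iff, hij, false_and, false_or,
    Option.exists, Prod.exists, (starSubdiv n).adj_comm none, starSubdiv_adj_some_none_iff]
  grind

lemma starSubdiv_square_adj_leaf_iff (i : Fin n) (y : Option (Fin n × Fin 3)) :
    (distPower (starSubdiv n) 2).Adj (some (i, 2)) y ↔ y = some (i, 0) ∨ y = some (i, 1) := by
  simp only [distPower_two_adj_iff, starSubdiv_adj_leaf_iff, exists_eq_left,
    starSubdiv_adj_mid_iff]
  grind

lemma starSubdiv_square_dist_leaf_leaf {i j : Fin n} (hij : i ≠ j) :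
    (distPower (starSubdiv n) 2).dist (some (i, 2)) (some (j, 2)) = 3 := by
  let p : (distPower (starSubdiv n) 2).Walk (some (i, 2)) (some (j, 2)) :=
    .cons ((starSubdiv_square_adj_leaf_iff i _).2 (.inl rfl))
      (.cons ((starSubdiv_square_adj_some_some_of_ne hij 0 0).2 ⟨rfl, rfl⟩)
        (.cons ((starSubdiv_square_adj_leaf_iff j _).2 (.inl rfl)).symm .nil))
  refine le_antisymm (dist_le p) (not_lt.1 fun hlt => ?_)
  obtain ⟨q, hq⟩ := p.reachable.exists_walk_length_eq_dist
  rcases q.eq_or_adj_or_exists_adj_adj_of_length_le_two (by omega) with h | h | ⟨x, hx, hxj⟩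
  · simp [hij] at h
  · simp [starSubdiv_square_adj_leaf_iff, hij.symm] at h
  · rcases (starSubdiv_square_adj_leaf_iff i x).1 hx with rfl | rfl <;>
      simp [starSubdiv_square_adj_some_some_of_ne hij] at hxj

lemma starSubdiv_square_rel_of_mem_oball_leaf_inter
    (hH : IsPartialOrientation (distPower (starSubdiv n) 2) H) {i j : Fin n} (hij : i ≠ j)
    {a b : ℕ} (hab : a + b ≤ 1) {w : Option (Fin n × Fin 3)}
    (hi : w ∈ oball H (some (i, 2)) a) (hj : w ∈ oball H (some (j, 2)) (b + 2)) :
    H (some (j, 0)) (some (i, 0)) := by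
  obtain ⟨x, y, hjx, hxy, hy⟩ := hH.exists_rel_rel_of_mem_oball_inter
    (by rw [starSubdiv_square_dist_leaf_leaf hij]; omega) hi hj
  obtain ⟨k, rfl⟩ : ∃ k, x = some (j, k) := by
    rcases (starSubdiv_square_adj_leaf_iff j x).1 (hH hjx) with rfl | rfl <;> exact ⟨_, rfl⟩
  obtain ⟨l, rfl⟩ : ∃ l, y = some (i, l) := by
    obtain ⟨p, hp⟩ := hH.exists_walk_of_mem_oball_inter hi hy
    rcases p with _ | ⟨h, _ | ⟨_, _⟩⟩
    · exact ⟨2, rfl⟩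
    · rcases (starSubdiv_square_adj_leaf_iff i _).1 h with rfl | rfl <;> exact ⟨_, rfl⟩
    · simp at hp; omega
  obtain ⟨rfl, rfl⟩ := (starSubdiv_square_adj_some_some_of_ne hij.symm k l).1 (hH hxy)
  exact hxy

lemma starSubdiv_square_plusGuidance_rel_or_rel
    (hH : IsPartialOrientation (distPower (starSubdiv n) 2) H)
    (hplus : IsPlusGuidance (distPower (starSubdiv n) 2) H 3) {i j : Fin n} (hij : i ≠ j) :
    H (some (i, 0)) (some (j, 0)) ∨ H (some (j, 0)) (some (i, 0)) := by
  have hd := starSubdiv_square_dist_leaf_leaf hij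
  obtain ⟨a, b, hab, w, hi, hj⟩ := hplus (some (i, 2)) (some (j, 2)) (by omega) (by omega)
  rw [hd] at hab
  rcases le_or_gt a 1 with ha | ha
  · obtain ⟨b, rfl⟩ : ∃ c, b = c + 2 := ⟨b - 2, by omega⟩
    exact .inr (starSubdiv_square_rel_of_mem_oball_leaf_inter hH hij (by omega) hi hj)
  · obtain ⟨a, rfl⟩ : ∃ c, a = c + 2 := ⟨a - 2, by omega⟩
    exact .inl (starSubdiv_square_rel_of_mem_oball_leaf_inter hH hij.symm (by omega) hj hi)

end starSubdiv

/-- In any `3⁺`-guidance system for the square of the twice-subdivided star `K_{1,n}`,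
some vertex has outdegree at least `(n-1)/2`. -/
theorem starSubdiv_square_plusGuidance_outdeg (n : ℕ)
    (H : Option (Fin n × Fin 3) → Option (Fin n × Fin 3) → Prop)
    (hpo : IsPartialOrientation (distPower (starSubdiv n) 2) H)
    (hplus : IsPlusGuidance (distPower (starSubdiv n) 2) H 3) :
    ∃ u, ((n : ℝ) - 1) / 2 ≤ outdeg H u := by
  rcases n.eq_zero_or_pos with rfl | hn
  · exact ⟨none, le_trans (by norm_num) (Nat.cast_nonneg _)⟩
  have : Nonempty (Fin n) := ⟨⟨0, hn⟩⟩
  let f : Fin n → Option (Fin n × Fin 3) := fun i => some (i, 0)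
  obtain ⟨i, hi⟩ := exists_card_sub_one_le_two_mul_outdeg (Function.onFun H f)
    fun i j hij => starSubdiv_square_plusGuidance_rel_or_rel hpo hplus hij
  have hle := outdeg_onFun_le H (f := f) (fun i j h => by simpa [f] using h) i
  rw [Fintype.card_fin] at hi
  have hnat : n ≤ 2 * outdeg H (f i) + 1 := by omega
  refine ⟨f i, ?_⟩
  have : (n : ℝ) ≤ 2 * outdeg H (f i) + 1 := by exact_mod_cast hnat
  linarith
end

section
/- Let p be a fractional r-guidance system in an n-vertex graph G with maximum outdegree at most c. Let F be a random partial orientation obtained by giving each non-isolated vertex z exactly one outgoing edge to a p-random neighbor of z. Then for any pair {u,v} of vertices at distance ℓ with 2 ≤ ℓ ≤ r, the probability that {u,v} is dissatisfied by F (neither u has its chosen outneighbor in gate_G(u,v) nor v has its chosen outneighbor in gate_G(v,u)) is at most 1 − 1/(2c). -/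
open SimpleGraph

variable {V : Type*}

/-- Total outgoing `p`-weight of `u` in a fractional orientation `p`. -/
noncomputable def dplus [Fintype V] (p : V → V → ℝ) (u : V) : ℝ := ∑ v, p u v

open Classical in
/-- The probability that a `p`-random neighbor of `u` is `y`. -/
noncomputable def wt [Fintype V] (G : SimpleGraph V) (p : V → V → ℝ) (u y : V) : ℝ :=
  if G.Adj u y then
    (if 0 < dplus p u then p u y / dplus p u else 1 / (G.neighborFinset u).card)
  else 0


open Classical in
lemma wt_nonneg {V : Type*} [Fintype V] (G : SimpleGraph V) (p : V → V → ℝ)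
    (hnn : ∀ u v, 0 ≤ p u v) (u y : V) : 0 ≤ wt G p u y := by
  unfold wt
  split_ifs with h1 h2
  · exact div_nonneg (hnn u y) (le_of_lt h2)
  · positivity
  · exact le_rfl

open Classical in
lemma sum_wt_le_one {V : Type*} [Fintype V] (G : SimpleGraph V) (p : V → V → ℝ)
    (hnn : ∀ u v, 0 ≤ p u v) (hsupp : ∀ u v, ¬G.Adj u v → p u v = 0) (u : V) :
    (∑ y, wt G p u y) ≤ 1 := by
  unfold wt
  by_cases h : 0 < dplus p u
  · simp only [if_pos h]
    have h1 : (∑ y, if G.Adj u y then p u y / dplus p u else 0)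
        = (∑ y, p u y) / dplus p u := by
      rw [Finset.sum_div]
      refine Finset.sum_congr rfl fun y _ => ?_
      by_cases hy : G.Adj u y
      · simp [hy]
      · simp [hy, hsupp u y hy]
    rw [h1]
    rw [div_le_one h]
    exact le_of_eq rfl
  · simp only [if_neg h]
    have h1 : (∑ y, if G.Adj u y then (1 : ℝ) / (G.neighborFinset u).card else 0)
        = (G.neighborFinset u).card * (1 / (G.neighborFinset u).card) := by
      rw [Finset.sum_ite, Finset.sum_const, Finset.sum_const_zero, add_zero,
        nsmul_eq_mul]
      have hfe : Finset.univ.filter (fun y => G.Adj u y) = G.neighborFinset u := by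
        ext y; simp [SimpleGraph.mem_neighborFinset]
      rw [hfe]
    rw [h1]
    rcases Nat.eq_zero_or_pos (G.neighborFinset u).card with h0 | h0
    · simp [h0]
    · rw [mul_one_div, div_self (by positivity)]

open Classical in
lemma dplus_eq_zero {V : Type*} [Fintype V] (p : V → V → ℝ)
    (hnn : ∀ u v, 0 ≤ p u v) (u : V) (h : ¬ 0 < dplus p u) (y : V) : p u y = 0 := by
  have h0 : dplus p u = 0 := le_antisymm (not_lt.mp h)
    (Finset.sum_nonneg fun y _ => hnn u y)
  exact (Finset.sum_eq_zero_iff_of_nonneg fun y _ => hnn u y).mp h0 y (Finset.mem_univ y)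

open Classical in
/-- Let `p` be a fractional `r`-guidance system of maximum outdegree at most `c`, and let
`F` be the random partial orientation giving each non-isolated vertex `z` a single
outgoing edge to a `p`-random neighbor of `z` (independently).  For a pair `u,v` at
distance `ℓ` with `2 ≤ ℓ ≤ r`, the probability that `{u,v}` is dissatisfied — the chosen
outneighbor of `u` is not in `gate G u v` and the chosen outneighbor of `v` is not in
`gate G v u` — equals the product below and is at most `1 - 1/(2c)`. -/
theorem dissatisfied_probability {V : Type*} [Fintype V] (G : SimpleGraph V)
    (p : V → V → ℝ) (r : ℕ) (c : ℝ) (hc : 0 < c)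
    (hnn : ∀ u v, 0 ≤ p u v) (hsupp : ∀ u v, ¬G.Adj u v → p u v = 0)
    (hfrac : ∀ u v, 2 ≤ G.dist u v → G.dist u v ≤ r →
      1 ≤ (∑ y, if y ∈ gate G u v then p u y else 0) +
          (∑ y, if y ∈ gate G v u then p v y else 0))
    (hout : ∀ u, dplus p u ≤ c)
    (u v : V) (h2 : 2 ≤ G.dist u v) (hr : G.dist u v ≤ r) :
    (1 - ∑ y, if y ∈ gate G u v then wt G p u y else 0) *
      (1 - ∑ y, if y ∈ gate G v u then wt G p v y else 0) ≤ 1 - 1 / (2 * c) := by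
 classical
  set A := (∑ y, if y ∈ gate G u v then wt G p u y else 0) with hAdef
  set B := (∑ y, if y ∈ gate G v u then wt G p v y else 0) with hBdef
  set a := (∑ y, if y ∈ gate G u v then p u y else 0) with hadef
  set b := (∑ y, if y ∈ gate G v u then p v y else 0) with hbdef
  have hab : 1 ≤ a + b := hfrac u v h2 hr
  have ha0 : 0 ≤ a := Finset.sum_nonneg fun y _ => by
    split_ifs; exacts [hnn u y, le_rfl]
  have hb0 : 0 ≤ b := Finset.sum_nonneg fun y _ => by
    split_ifs; exacts [hnn v y, le_rfl]
  -- generic facts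
  have key : ∀ w z : V, 0 < dplus p w →
      (∑ y, if y ∈ gate G w z then p w y else 0) / c
      ≤ (∑ y, if y ∈ gate G w z then wt G p w y else 0) := by
    intro w z hw
    have h1 : (∑ y, if y ∈ gate G w z then wt G p w y else 0)
        = (∑ y, if y ∈ gate G w z then p w y else 0) / dplus p w := by
      rw [Finset.sum_div]
      refine Finset.sum_congr rfl fun y _ => ?_
      by_cases hy : y ∈ gate G w z
      · have hadj : G.Adj w y := hy.1
        simp [hy, wt, hadj, if_pos hw]
      · simp [hy]
    rw [h1]
    exact div_le_div_of_nonneg_left (Finset.sum_nonneg fun y _ => by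
      split_ifs; exacts [hnn w y, le_rfl]) hw (hout w)
  have nonneg : ∀ w z : V, 0 ≤ (∑ y, if y ∈ gate G w z then wt G p w y else 0) :=
    fun w z => Finset.sum_nonneg fun y _ => by
      split_ifs; exacts [wt_nonneg G p hnn w y, le_rfl]
  have le_one : ∀ w z : V, (∑ y, if y ∈ gate G w z then wt G p w y else 0) ≤ 1 :=
    fun w z => le_trans (Finset.sum_le_sum fun y _ => by
      split_ifs; exacts [le_rfl, wt_nonneg G p hnn w y]) (sum_wt_le_one G p hnn hsupp w)
  have hA0 : 0 ≤ A := nonneg u v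
  have hB0 : 0 ≤ B := nonneg v u
  have hA1 : A ≤ 1 := le_one u v
  have hB1 : B ≤ 1 := le_one v u
  have hsum : 1 / c ≤ A + B := by
    by_cases hu : 0 < dplus p u
    · by_cases hv : 0 < dplus p v
      · calc 1 / c ≤ (a + b) / c := by gcongr
            _ = a / c + b / c := add_div a b c
            _ ≤ A + B := add_le_add (key u v hu) (key v u hv)
    -- if dplus p v = 0 then b = 0, so a ≥ 1
      · have hb : b = 0 := Finset.sum_eq_zero fun y _ => by
          split_ifs; exacts [dplus_eq_zero p hnn v hv y, rfl]
        have ha1 : 1 ≤ a := by linarith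
        calc 1 / c ≤ a / c := by gcongr
          _ ≤ A := key u v hu
          _ ≤ A + B := le_add_of_nonneg_right hB0
    · have ha : a = 0 := Finset.sum_eq_zero fun y _ => by
        split_ifs; exacts [dplus_eq_zero p hnn u hu y, rfl]
      have hb1 : 1 ≤ b := by linarith
      have hv : 0 < dplus p v := by
        by_contra hv
        have : b = 0 := Finset.sum_eq_zero fun y _ => by
          split_ifs; exacts [dplus_eq_zero p hnn v hv y, rfl]
        linarith
      calc 1 / c ≤ b / c := by gcongr
        _ ≤ B := key v u hv
        _ ≤ A + B := le_add_of_nonneg_left hA0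
  have hcne : (1:ℝ)/c > 0 := by positivity
  have h2c : 1 / (2 * c) = (1 / c) / 2 := by
    field_simp
  rw [h2c]
  nlinarith [mul_nonneg hA0 (sub_nonneg.mpr hB1), mul_nonneg hB0 (sub_nonneg.mpr hA1),
    mul_nonneg (sub_nonneg.mpr hA1) (sub_nonneg.mpr hB1)]
end
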